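/- Let A, B = [b_ij] be n×n complex positive semidefinite matrices with r = rank(B) ≥ 1. Then λ_min(A ∘ B) ≥ (μ_{n−r+1}(A)/κ_eff(B)) · min_{1≤i≤n} b_ii. -/

import Mathlib

open Matrix
open scoped Matrix ComplexOrder

/-- `mu m A` is the smallest of the eigenvalues of all `m × m` principal submatrices of `A`
(principal submatrices are obtained by selecting the same set of `m` row and column indices). -/
noncomputable def mu {n : ℕ} (m : ℕ) (A : Matrix (Fin n) (Fin n) ℂ) : ℝ :=
  sInf {t : ℝ | ∃ f : Fin m → Fin n, Function.Injective f ∧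
    ∃ h : (A.submatrix f f).IsHermitian, ∃ i : Fin m, t = h.eigenvalues i}

/-- The smallest eigenvalue of a Hermitian matrix. -/
noncomputable def lambdaMin {n : ℕ} {A : Matrix (Fin n) (Fin n) ℂ} (hA : A.IsHermitian) : ℝ :=
  ⨅ i, hA.eigenvalues i

/-- The largest eigenvalue of a Hermitian matrix. -/
noncomputable def lambdaMax {n : ℕ} {A : Matrix (Fin n) (Fin n) ℂ} (hA : A.IsHermitian) : ℝ :=
  ⨆ i, hA.eigenvalues i

/-- The smallest positive eigenvalue of a Hermitian matrix. -/
noncomputable def lambdaMinPos {n : ℕ} {A : Matrix (Fin n) (Fin n) ℂ} (hA : A.IsHermitian) : ℝ :=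
  sInf {t : ℝ | (∃ i, hA.eigenvalues i = t) ∧ 0 < t}

/-- The effective condition number of a positive semidefinite matrix: the ratio of its largest
and smallest positive eigenvalues. -/
noncomputable def kappaEff {n : ℕ} {B : Matrix (Fin n) (Fin n) ℂ} (hB : B.IsHermitian) : ℝ :=
  lambdaMax hB / lambdaMinPos hB

/-!
Let `P` be the orthogonal projection onto the range of `B` and `λ₊`, `λ_max` the extreme positive
eigenvalues of `B`. Then `λ₊ P ≤ B ≤ λ_max P` in the Loewner order, so the Schur product theorem
gives `A ∘ B ≥ λ₊ (A ∘ P)`, while `b_ii ≤ λ_max P_ii`. The heart of the matter is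
`A ∘ P ≥ μ_{n-r+1}(A) · diag P`. Write `P = W Wᴴ` with `W` having `r = s + 1` orthonormal columns,
and for `g : Fin s → Fin n` let `z_g p` be the maximal minor of `W` on the rows `p, g 0, …, g (s-1)`.
By Cauchy–Binet `∑_g z_g z_gᴴ = s! P`, and `z_g` vanishes on the `s` rows `g i`, so
`xᴴ (A ∘ z_g z_gᴴ) x = yᴴ A y` with `y = z̄_g ∘ x` supported on `n - s` coordinates; such a quadratic
form is bounded below through a principal submatrix of order `n - s`.
-/

namespace Matrix

variable {R : Type*} [CommRing R] {m ι : Type*} [Fintype m] [DecidableEq m] [Fintype ι]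

theorem det_mul_eq_sum_prod_mul_det_submatrix (M : Matrix m ι R) (N : Matrix ι m R) :
    (M * N).det = ∑ g : m → ι, (∏ i, M i (g i)) * (N.submatrix g id).det := by
  have hrows : M * N = Matrix.of fun i => ∑ p, M i p • N p := by
    ext i j
    simp [mul_apply, Finset.sum_apply]
  have h := (detRowAlternating (R := R) (n := m)).toMultilinearMap.map_sum fun i p => M i p • N p
  simp only [AlternatingMap.coe_multilinearMap, MultilinearMap.map_smul_univ] at h
  rw [hrows]
  exact h

/-- Cauchy–Binet, summed over all maps `m → ι` rather than over subsets of `ι`. -/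
theorem sum_det_submatrix_mul_det_submatrix (M : Matrix m ι R) (N : Matrix ι m R) :
    ∑ g : m → ι, (M.submatrix id g).det * (N.submatrix g id).det
      = (Fintype.card m).factorial * (M * N).det := by
  calc ∑ g : m → ι, (M.submatrix id g).det * (N.submatrix g id).det
      = ∑ σ : Equiv.Perm m, (Equiv.Perm.sign σ : R) *
          ∑ g : m → ι, (∏ i, M.submatrix σ id i (g i)) * (N.submatrix g id).det := by
        simp_rw [det_apply', Finset.sum_mul, Finset.mul_sum]
        rw [Finset.sum_comm]
        simp [mul_assoc]
    _ = ∑ σ : Equiv.Perm m, (M * N).det := by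
        refine Finset.sum_congr rfl fun σ _ => ?_
        have h := submatrix_mul M N σ id id Function.bijective_id
        rw [submatrix_id_id] at h
        rw [← det_mul_eq_sum_prod_mul_det_submatrix, ← h, det_permute, ← mul_assoc,
          ← Int.cast_mul, ← Units.val_mul, Int.units_mul_self]
        simp
    _ = (Fintype.card m).factorial * (M * N).det := by
        simp [Fintype.card_perm]

end Matrix

section Minors

variable {n s : ℕ} (W : Matrix (Fin n) (Fin (s + 1)) ℂ)

noncomputable def cofactorVec (g : Fin s → Fin n) (j : Fin (s + 1)) : ℂ :=
  (-1) ^ (j : ℕ) * (W.submatrix g j.succAbove).det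

noncomputable def minorVec (g : Fin s → Fin n) : Fin n → ℂ :=
  W *ᵥ cofactorVec W g

lemma minorVec_apply (g : Fin s → Fin n) (p : Fin n) :
    minorVec W g p = (W.submatrix (Fin.cons p g) id).det := by
  rw [det_succ_row_zero]
  simp only [minorVec, cofactorVec, mulVec, dotProduct, submatrix_apply, Fin.cons_zero, id,
    submatrix_submatrix, Fin.cons_comp_succ, Function.id_comp]
  exact Finset.sum_congr rfl fun _ _ => by ring

lemma minorVec_apply_self (g : Fin s → Fin n) (i : Fin s) : minorVec W g (g i) = 0 := by
  rw [minorVec_apply]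
  exact det_zero_of_row_eq (Fin.succ_ne_zero i).symm (by funext k; simp)

lemma minorVec_eq_zero_of_not_injective {g : Fin s → Fin n} (hg : ¬ Function.Injective g) :
    minorVec W g = 0 := by
  obtain ⟨i, i', hii', hne⟩ := Function.not_injective_iff.mp hg
  funext p
  rw [minorVec_apply]
  exact det_zero_of_row_eq (i := i.succ) (j := i'.succ) (by simpa using hne)
    (by funext k; simp [hii'])

lemma exists_card_eq_minorVec_eq_zero (g : Fin s → Fin n) :
    ∃ S : Finset (Fin n), S.card = n - s ∧ ∀ p ∉ S, minorVec W g p = 0 := by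
  by_cases hg : Function.Injective g
  · refine ⟨(Finset.univ.image g)ᶜ, ?_, fun p hp => ?_⟩
    · rw [Finset.card_compl, Finset.card_image_of_injective _ hg, Finset.card_univ,
        Fintype.card_fin, Fintype.card_fin]
    · obtain ⟨i, rfl⟩ : ∃ i, g i = p := by simpa using hp
      exact minorVec_apply_self W g i
  · obtain ⟨S, -, hS⟩ := Finset.exists_subset_card_eq (s := (Finset.univ : Finset (Fin n)))
      (n := n - s) (by simp)
    exact ⟨S, hS, fun p _ => by rw [minorVec_eq_zero_of_not_injective W hg, Pi.zero_apply]⟩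

lemma sum_vecMulVec_cofactorVec (hW : Wᴴ * W = 1) :
    ∑ g, vecMulVec (cofactorVec W g) (star (cofactorVec W g)) = (s.factorial : ℂ) • 1 := by
  ext j k
  simp only [Matrix.sum_apply, vecMulVec_apply, Pi.star_apply, cofactorVec, star_mul', star_pow,
    star_neg, star_one, ← det_conjTranspose, conjTranspose_submatrix, Matrix.smul_apply,
    smul_eq_mul]
  have hCB := sum_det_submatrix_mul_det_submatrix (Wᴴ.submatrix k.succAbove id)
    (W.submatrix id j.succAbove)
  rw [← submatrix_mul _ _ _ _ _ Function.bijective_id, hW, Fintype.card_fin] at hCB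
  calc ∑ g : Fin s → Fin n, (-1) ^ (j : ℕ) * (W.submatrix g j.succAbove).det
        * ((-1) ^ (k : ℕ) * (Wᴴ.submatrix k.succAbove g).det)
      = (-1) ^ (j : ℕ) * (-1) ^ (k : ℕ) * ∑ g : Fin s → Fin n,
          (Wᴴ.submatrix k.succAbove g).det * (W.submatrix g j.succAbove).det := by
        rw [Finset.mul_sum]
        exact Finset.sum_congr rfl fun _ _ => by ring
    _ = (-1) ^ (j : ℕ) * (-1) ^ (k : ℕ) * (s.factorial
          * ((1 : Matrix (Fin (s + 1)) (Fin (s + 1)) ℂ).submatrix k.succAbove j.succAbove).det) :=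
        by rw [← hCB]; rfl
    _ = s.factorial * (1 : Matrix (Fin (s + 1)) (Fin (s + 1)) ℂ) j k := by
        by_cases hjk : j = k
        · subst hjk
          rw [submatrix_one _ Fin.succAbove_right_injective, det_one, one_apply_eq, ← mul_pow]
          simp
        · obtain ⟨l, hl⟩ := Fin.exists_succAbove_eq hjk
          rw [det_eq_zero_of_row_eq_zero l fun i => by
            rw [submatrix_apply, hl, one_apply_ne (Fin.succAbove_ne j i).symm], one_apply_ne hjk]
          simp

lemma sum_vecMulVec_minorVec (hW : Wᴴ * W = 1) :
    ∑ g, vecMulVec (minorVec W g) (star (minorVec W g)) = (s.factorial : ℂ) • (W * Wᴴ) := by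
  have h : ∀ g, vecMulVec (minorVec W g) (star (minorVec W g))
      = W * vecMulVec (cofactorVec W g) (star (cofactorVec W g)) * Wᴴ := fun g => by
    rw [mul_vecMulVec, vecMulVec_mul, minorVec, star_mulVec]
  rw [Finset.sum_congr rfl fun g _ => h g, ← Matrix.sum_mul, ← Matrix.mul_sum,
    sum_vecMulVec_cofactorVec W hW, Matrix.mul_smul, Matrix.mul_one, Matrix.smul_mul]

end Minors

section Spectral

variable {ι : Type*} [Fintype ι] [DecidableEq ι]

lemma posSemidef_mul_diagonal_mul_star_sub (U : Matrix ι ι ℂ) {d e : ι → ℝ} (h : d ≤ e) :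
    (U * diagonal (fun k => (e k : ℂ)) * star U
      - U * diagonal (fun k => (d k : ℂ)) * star U).PosSemidef := by
  rw [← sub_mul, ← mul_sub, diagonal_sub, star_eq_conjTranspose]
  refine PosSemidef.mul_mul_conjTranspose_same (PosSemidef.diagonal fun k => ?_) U
  simpa using h k

namespace Matrix.IsHermitian

variable {M : Matrix ι ι ℂ} (hM : M.IsHermitian)

lemma eq_mul_diagonal_mul_star :
    M = (hM.eigenvectorUnitary : Matrix ι ι ℂ) * diagonal (fun k => (hM.eigenvalues k : ℂ))
      * star (hM.eigenvectorUnitary : Matrix ι ι ℂ) := by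
  conv_lhs => rw [hM.spectral_theorem]
  rfl

lemma le_dotProduct_mulVec_of_le_eigenvalues {c : ℝ} (hc : ∀ k, c ≤ hM.eigenvalues k)
    (v : ι → ℂ) : (c : ℂ) * (star v ⬝ᵥ v) ≤ star v ⬝ᵥ (M *ᵥ v) := by
  set U := (hM.eigenvectorUnitary : Matrix ι ι ℂ)
  have hc1 : (c : ℂ) • (1 : Matrix ι ι ℂ) = U * diagonal (fun _ => (c : ℂ)) * star U := by
    rw [← smul_one_eq_diagonal, mul_smul_comm, smul_mul_assoc, mul_one,
      Unitary.mul_star_self_of_mem hM.eigenvectorUnitary.2]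
  have h := (posSemidef_mul_diagonal_mul_star_sub U (d := fun _ => c) hc).dotProduct_mulVec_nonneg v
  rw [← hc1, ← hM.eq_mul_diagonal_mul_star, sub_mulVec, dotProduct_sub, smul_mulVec,
    one_mulVec, dotProduct_smul, smul_eq_mul, sub_nonneg] at h
  exact h

noncomputable def rangeProj : Matrix ι ι ℂ :=
  (hM.eigenvectorUnitary : Matrix ι ι ℂ)
    * diagonal (fun k => if hM.eigenvalues k = 0 then 0 else 1)
    * star (hM.eigenvectorUnitary : Matrix ι ι ℂ)

lemma smul_rangeProj (c : ℝ) :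
    (c : ℂ) • hM.rangeProj = (hM.eigenvectorUnitary : Matrix ι ι ℂ)
      * diagonal (fun k => ((if hM.eigenvalues k = 0 then 0 else c : ℝ) : ℂ))
      * star (hM.eigenvectorUnitary : Matrix ι ι ℂ) := by
  rw [rangeProj, ← smul_mul_assoc, ← mul_smul_comm, ← diagonal_smul]
  congr 2
  ext i j
  by_cases hk : hM.eigenvalues i = 0 <;> simp [diagonal_apply, hk]

lemma posSemidef_sub_smul_rangeProj {c : ℝ}
    (hc : ∀ k, hM.eigenvalues k ≠ 0 → c ≤ hM.eigenvalues k) :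
    (M - (c : ℂ) • hM.rangeProj).PosSemidef := by
  have h := posSemidef_mul_diagonal_mul_star_sub (hM.eigenvectorUnitary : Matrix ι ι ℂ)
    (d := fun k => if hM.eigenvalues k = 0 then 0 else c) (e := hM.eigenvalues) fun k => by
      dsimp only
      split_ifs with hk
      · exact hk.ge
      · exact hc k hk
  rwa [← hM.smul_rangeProj, ← hM.eq_mul_diagonal_mul_star] at h

lemma posSemidef_smul_rangeProj_sub {d : ℝ} (hd : ∀ k, hM.eigenvalues k ≤ d) :
    ((d : ℂ) • hM.rangeProj - M).PosSemidef := by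
  have h := posSemidef_mul_diagonal_mul_star_sub (hM.eigenvectorUnitary : Matrix ι ι ℂ)
    (d := hM.eigenvalues) (e := fun k => if hM.eigenvalues k = 0 then 0 else d) fun k => by
      dsimp only
      split_ifs with hk
      · exact hk.le
      · exact hd k
  rwa [← hM.smul_rangeProj, ← hM.eq_mul_diagonal_mul_star] at h

lemma exists_mul_conjTranspose_eq_rangeProj :
    ∃ W : Matrix ι (Fin M.rank) ℂ, Wᴴ * W = 1 ∧ W * Wᴴ = hM.rangeProj := by
  set S := Finset.univ.filter fun k => hM.eigenvalues k ≠ 0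
  have hS : S.card = M.rank := by
    rw [hM.rank_eq_card_non_zero_eigs, Fintype.card_subtype]
  set U := (hM.eigenvectorUnitary : Matrix ι ι ℂ)
  set e := S.equivFinOfCardEq hS
  have he : Function.Injective fun j => (e.symm j : ι) :=
    Subtype.val_injective.comp e.symm.injective
  refine ⟨U.submatrix id fun j => e.symm j, ?_, ?_⟩
  · rw [conjTranspose_submatrix, ← submatrix_mul _ _ _ _ _ Function.bijective_id,
      ← star_eq_conjTranspose, Unitary.star_mul_self_of_mem hM.eigenvectorUnitary.2]
    exact submatrix_one _ he
  · ext p q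
    rw [rangeProj, mul_apply, mul_apply]
    simp only [mul_diagonal, submatrix_apply, conjTranspose_apply, id, star_apply]
    rw [Equiv.sum_comp e.symm (fun k : S => U p k * star (U q k)),
      Finset.sum_coe_sort S (fun k => U p k * star (U q k)), Finset.sum_filter]
    refine Finset.sum_congr rfl fun k _ => ?_
    by_cases hk : hM.eigenvalues k = 0 <;> simp [U, hk]

end Matrix.IsHermitian

end Spectral

section QuadraticForms

variable {ι : Type*} [Fintype ι]

lemma dotProduct_hadamard_vecMulVec_mulVec (A : Matrix ι ι ℂ) (z x : ι → ℂ) :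
    star x ⬝ᵥ ((A ⊙ vecMulVec z (star z)) *ᵥ x) = star (star z * x) ⬝ᵥ (A *ᵥ (star z * x)) := by
  simp only [dotProduct, mulVec, hadamard_apply, vecMulVec_apply, Pi.star_apply, Pi.mul_apply,
    star_mul', star_star, Finset.mul_sum]
  exact Finset.sum_congr rfl fun _ _ => Finset.sum_congr rfl fun _ _ => by ring

lemma dotProduct_hadamard_sum_mulVec {κ : Type*} [Fintype κ] (A : Matrix ι ι ℂ)
    (M : κ → Matrix ι ι ℂ) (x : ι → ℂ) :
    star x ⬝ᵥ ((A ⊙ ∑ g, M g) *ᵥ x) = ∑ g, star x ⬝ᵥ ((A ⊙ M g) *ᵥ x) := by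
  have h : A ⊙ ∑ g, M g = ∑ g, A ⊙ M g := by
    ext i j
    simp [Matrix.sum_apply, Finset.mul_sum]
  rw [h, sum_mulVec, dotProduct_sum]

lemma mul_dotProduct_le_one_hadamard [DecidableEq ι] (M : Matrix ι ι ℂ) {c : ℂ}
    (hc : ∀ p, c ≤ M p p) (x : ι → ℂ) : c * (star x ⬝ᵥ x) ≤ star x ⬝ᵥ ((1 ⊙ M) *ᵥ x) := by
  rw [one_hadamard, dotProduct, dotProduct, Finset.mul_sum]
  refine Finset.sum_le_sum fun p _ => ?_
  rw [mulVec_diagonal, diag_apply, Pi.star_apply]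
  calc c * (star (x p) * x p) ≤ M p p * (star (x p) * x p) :=
        mul_le_mul_of_nonneg_right (hc p) (star_mul_self_nonneg (x p))
    _ = star (x p) * (M p p * x p) := by ring

end QuadraticForms

section Mu

variable {n m : ℕ} {A : Matrix (Fin n) (Fin n) ℂ}

lemma mu_nonneg (hA : A.PosSemidef) : 0 ≤ mu m A := by
  refine Real.sInf_nonneg ?_
  rintro t ⟨f, -, h, i, rfl⟩
  exact (hA.submatrix f).eigenvalues_nonneg i

lemma mu_le_eigenvalues (hA : A.PosSemidef) {f : Fin m → Fin n} (hf : Function.Injective f)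
    (i : Fin m) : mu m A ≤ (hA.submatrix f).isHermitian.eigenvalues i := by
  refine csInf_le ⟨0, ?_⟩ ⟨f, hf, _, i, rfl⟩
  rintro t ⟨f, -, h, i, rfl⟩
  exact (hA.submatrix f).eigenvalues_nonneg i

lemma mu_mul_dotProduct_le (hA : A.PosSemidef) {S : Finset (Fin n)} (hS : S.card = m)
    {u : Fin n → ℂ} (hu : ∀ p ∉ S, u p = 0) :
    (mu m A : ℂ) * (star u ⬝ᵥ u) ≤ star u ⬝ᵥ (A *ᵥ u) := by
  set f := S.orderEmbOfFin hS
  have hf : Function.Injective f := f.injective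
  have hu' : ∀ p ∉ Set.range f, u p = 0 := fun p hp => hu p (by simpa [f] using hp)
  have hsum : ∀ F : Fin n → ℂ, (∀ p ∉ Set.range f, F p = 0) → ∑ p, F p = ∑ a, F (f a) :=
    fun F hF => (Fintype.sum_of_injective f hf _ F hF fun _ => rfl).symm
  have hnorm : star u ⬝ᵥ u = star (u ∘ f) ⬝ᵥ (u ∘ f) :=
    hsum _ fun p hp => by simp [hu' p hp]
  have hquad : star u ⬝ᵥ (A *ᵥ u) = star (u ∘ f) ⬝ᵥ (A.submatrix f f *ᵥ (u ∘ f)) := by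
    rw [dotProduct, hsum _ fun p hp => by simp [hu' p hp]]
    refine Finset.sum_congr rfl fun a _ => ?_
    simp only [mulVec, dotProduct, Pi.star_apply, Function.comp_apply, submatrix_apply]
    rw [hsum _ fun p hp => by simp [hu' p hp]]
  rw [hnorm, hquad]
  exact (hA.submatrix f).isHermitian.le_dotProduct_mulVec_of_le_eigenvalues
    (mu_le_eigenvalues hA hf) _

lemma mu_mul_dotProduct_one_hadamard_le {r : ℕ} (hA : A.PosSemidef) (hrn : r ≤ n)
    {W : Matrix (Fin n) (Fin r) ℂ} (hW : Wᴴ * W = 1) (x : Fin n → ℂ) :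
    (mu (n - r + 1) A : ℂ) * (star x ⬝ᵥ ((1 ⊙ (W * Wᴴ)) *ᵥ x))
      ≤ star x ⬝ᵥ ((A ⊙ (W * Wᴴ)) *ᵥ x) := by
  cases r with
  | zero => simp
  | succ s =>
    rw [show n - (s + 1) + 1 = n - s by omega]
    have hframe := sum_vecMulVec_minorVec W hW
    have hK : (0 : ℂ) < s.factorial := by exact_mod_cast s.factorial_pos
    refine le_of_mul_le_mul_left ?_ hK
    calc (s.factorial : ℂ) * ((mu (n - s) A : ℂ) * (star x ⬝ᵥ ((1 ⊙ (W * Wᴴ)) *ᵥ x)))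
        = ∑ g, (mu (n - s) A : ℂ) * (star x ⬝ᵥ
            ((1 ⊙ vecMulVec (minorVec W g) (star (minorVec W g))) *ᵥ x)) := by
          rw [← Finset.mul_sum, ← dotProduct_hadamard_sum_mulVec, hframe, hadamard_smul,
            smul_mulVec, dotProduct_smul, smul_eq_mul]
          ring
      _ ≤ ∑ g, star x ⬝ᵥ ((A ⊙ vecMulVec (minorVec W g) (star (minorVec W g))) *ᵥ x) := by
          refine Finset.sum_le_sum fun g _ => ?_
          obtain ⟨S, hS, hz⟩ := exists_card_eq_minorVec_eq_zero W g
          rw [dotProduct_hadamard_vecMulVec_mulVec, dotProduct_hadamard_vecMulVec_mulVec,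
            one_mulVec]
          exact mu_mul_dotProduct_le hA hS fun p hp => by simp [hz p hp]
      _ = (s.factorial : ℂ) * (star x ⬝ᵥ ((A ⊙ (W * Wᴴ)) *ᵥ x)) := by
          rw [← dotProduct_hadamard_sum_mulVec, hframe, hadamard_smul, smul_mulVec,
            dotProduct_smul, smul_eq_mul]

end Mu

section Extremal

variable {n : ℕ} {M : Matrix (Fin n) (Fin n) ℂ}

lemma le_lambdaMin [Nonempty (Fin n)] (hM : M.IsHermitian) {c : ℝ}
    (h : ∀ x, (c : ℂ) * (star x ⬝ᵥ x) ≤ star x ⬝ᵥ (M *ᵥ x)) : c ≤ lambdaMin hM := by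
  refine le_ciInf fun i => ?_
  have hv : star ⇑(hM.eigenvectorBasis i) ⬝ᵥ ⇑(hM.eigenvectorBasis i) = 1 := by
    rw [dotProduct_comm, ← EuclideanSpace.inner_eq_star_dotProduct, inner_self_eq_norm_sq_to_K,
      hM.eigenvectorBasis.orthonormal.1 i]
    simp
  have hi := h (hM.eigenvectorBasis i)
  rw [hv, mul_one] at hi
  rw [hM.eigenvalues_eq i]
  exact (Complex.le_def.mp hi).1

lemma lambdaMinPos_nonneg (hM : M.IsHermitian) : 0 ≤ lambdaMinPos hM :=
  Real.sInf_nonneg fun _ ht => ht.2.le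

lemma lambdaMinPos_le (hM : M.IsHermitian) {k : Fin n} (hk : 0 < hM.eigenvalues k) :
    lambdaMinPos hM ≤ hM.eigenvalues k :=
  csInf_le ⟨0, fun _ ht => ht.2.le⟩ ⟨⟨k, rfl⟩, hk⟩

lemma le_lambdaMax (hM : M.IsHermitian) (k : Fin n) : hM.eigenvalues k ≤ lambdaMax hM :=
  le_ciSup (Set.finite_range _).bddAbove k

lemma div_lambdaMax_le_rangeProj_apply (hM : M.PosSemidef) (p : Fin n) :
    (((⨅ i, (M i i).re) / lambdaMax hM.1 : ℝ) : ℂ) ≤ hM.1.rangeProj p p := by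
  obtain ⟨W, -, hWP⟩ := hM.1.exists_mul_conjTranspose_eq_rangeProj
  have hP := (posSemidef_self_mul_conjTranspose W).diag_nonneg (i := p)
  have hMP := (hM.1.posSemidef_smul_rangeProj_sub (le_lambdaMax hM.1)).diag_nonneg (i := p)
  have hinf : ⨅ i, (M i i).re ≤ (M p p).re := ciInf_le (Set.finite_range _).bddBelow p
  rw [hWP] at hP
  rw [Matrix.sub_apply, Matrix.smul_apply, smul_eq_mul] at hMP
  rw [Complex.le_def] at hP hMP ⊢
  simp only [Complex.zero_re, Complex.zero_im, Complex.sub_re, Complex.sub_im,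
    Complex.re_ofReal_mul, Complex.im_ofReal_mul, Complex.ofReal_re, Complex.ofReal_im] at hP hMP ⊢
  exact ⟨div_le_of_le_mul₀ (Real.iSup_nonneg hM.eigenvalues_nonneg) hP.1 (by linarith), hP.2⟩

lemma lambdaMinPos_mul_dotProduct_hadamard_rangeProj_le {A : Matrix (Fin n) (Fin n) ℂ}
    (hA : A.PosSemidef) (hM : M.PosSemidef) (x : Fin n → ℂ) :
    (lambdaMinPos hM.1 : ℂ) * (star x ⬝ᵥ ((A ⊙ hM.1.rangeProj) *ᵥ x))
      ≤ star x ⬝ᵥ ((A ⊙ M) *ᵥ x) := by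
  have hschur := hA.hadamard (hM.1.posSemidef_sub_smul_rangeProj fun k hk =>
    lambdaMinPos_le hM.1 ((hM.eigenvalues_nonneg k).lt_of_ne' hk))
  have hsplit : star x ⬝ᵥ ((A ⊙ M) *ᵥ x)
      = star x ⬝ᵥ ((A ⊙ (M - (lambdaMinPos hM.1 : ℂ) • hM.1.rangeProj)) *ᵥ x)
        + (lambdaMinPos hM.1 : ℂ) * (star x ⬝ᵥ ((A ⊙ hM.1.rangeProj) *ᵥ x)) := by
    rw [← smul_eq_mul, ← dotProduct_smul, ← smul_mulVec, ← hadamard_smul, ← dotProduct_add,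
      ← add_mulVec, ← hadamard_add, sub_add_cancel]
  rw [hsplit]
  exact le_add_of_nonneg_left (hschur.dotProduct_mulVec_nonneg x)

end Extremal

/-- **Main theorem.** For positive semidefinite `A, B` with `r = rank B ≥ 1`,
`λ_min(A ⊙ B) ≥ (μ_{n-r+1}(A)/κ_eff(B)) · min_i b_ii`. -/
theorem stmt_9 {n : ℕ} (A B : Matrix (Fin n) (Fin n) ℂ)
    (hA : A.PosSemidef) (hB : B.PosSemidef) (r : ℕ) (hr : r = B.rank) (hr1 : 1 ≤ r)
    (hAB : (A ⊙ B).IsHermitian) :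
    lambdaMin hAB ≥ mu (n - r + 1) A / kappaEff hB.1 * ⨅ i, (B i i).re := by
  subst hr
  have hrn : B.rank ≤ n := by simpa using B.rank_le_card_width
  have : Nonempty (Fin n) := ⟨⟨0, by omega⟩⟩
  obtain ⟨W, hW, hWP⟩ := hB.1.exists_mul_conjTranspose_eq_rangeProj
  set μ := mu (n - B.rank + 1) A
  set β := ⨅ i, (B i i).re
  have hlmin : (0 : ℂ) ≤ lambdaMinPos hB.1 := Complex.zero_le_real.mpr (lambdaMinPos_nonneg hB.1)
  have hμ : (0 : ℂ) ≤ μ := Complex.zero_le_real.mpr (mu_nonneg hA)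
  rw [ge_iff_le, kappaEff, div_div_eq_mul_div,
    show μ * lambdaMinPos hB.1 / lambdaMax hB.1 * β = lambdaMinPos hB.1 * (μ * (β / lambdaMax hB.1))
      by ring]
  refine le_lambdaMin hAB fun x => ?_
  calc ((lambdaMinPos hB.1 * (μ * (β / lambdaMax hB.1)) : ℝ) : ℂ) * (star x ⬝ᵥ x)
      = lambdaMinPos hB.1 * (μ * (((β / lambdaMax hB.1 : ℝ) : ℂ) * (star x ⬝ᵥ x))) := by
        push_cast
        ring
    _ ≤ lambdaMinPos hB.1 * (μ * (star x ⬝ᵥ ((1 ⊙ hB.1.rangeProj) *ᵥ x))) :=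
        mul_le_mul_of_nonneg_left (mul_le_mul_of_nonneg_left
          (mul_dotProduct_le_one_hadamard _ (div_lambdaMax_le_rangeProj_apply hB) x) hμ) hlmin
    _ ≤ lambdaMinPos hB.1 * (star x ⬝ᵥ ((A ⊙ hB.1.rangeProj) *ᵥ x)) := by
        rw [← hWP]
        exact mul_le_mul_of_nonneg_left (mu_mul_dotProduct_one_hadamard_le hA hrn hW x) hlmin
    _ ≤ star x ⬝ᵥ ((A ⊙ B) *ᵥ x) := lambdaMinPos_mul_dotProduct_hadamard_rangeProj_le hA hB x
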